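/- Let |ψ₁⟩ = ½(|00⟩+|01⟩−|10⟩+|11⟩), |ψ₂⟩ = ½(|00⟩−|01⟩+|10⟩+|11⟩), |ψ₃⟩ = ½(|00⟩+i|01⟩−i|10⟩−|11⟩), |ψ₄⟩ = ½(|00⟩−i|01⟩+i|10⟩−|11⟩). Then for every standard basis vector |s⟩ of ℂ² ⊗ ℂ² and every 2×2 complex matrix A, Σ_{i=1}^4 ⟨U_{|s⟩}ψ_i| (I ⊗ A) |U_{|s⟩}ψ_i⟩ = 2 Tr(A); that is, for each secret s, the four reduced states of the shared states U_s|ψ_i⟩ on the second (Bob's) qubit sum to 2I, so for any single-qubit density matrix ρ the average fidelity of these four reduced states with ρ equals exactly 1/2. -/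
import Mathlib


open scoped ComplexConjugate ComplexOrder
open Finset

noncomputable section

/-- Standard (computational) basis vector `|s⟩` of the two-qubit space `ℂ² ⊗ ℂ²`. -/
def e (s : Fin 2 × Fin 2) : Fin 2 × Fin 2 → ℂ := fun p => if p = s then 1 else 0

/-- The standard inner product `⟨u|v⟩` on two-qubit vectors
(conjugate-linear in the first argument). -/
def inner2 (u v : Fin 2 × Fin 2 → ℂ) : ℂ := ∑ p, conj (u p) * v p

/-- The Grover reflection operator `U_{|x⟩} = I - 2|x⟩⟨x|` applied to `v`. -/
def grover (x v : Fin 2 × Fin 2 → ℂ) : Fin 2 × Fin 2 → ℂ :=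
  v - (2 * inner2 x v) • x

/-- The operator `I ⊗ A` (acting on the second, Bob's, qubit) applied to a two-qubit
vector. -/
def applyIA (A : Matrix (Fin 2) (Fin 2) ℂ) (w : Fin 2 × Fin 2 → ℂ) :
    Fin 2 × Fin 2 → ℂ := fun p => ∑ j, A p.2 j * w (p.1, j)

/-- The nonce `|ψ₁⟩ = ½(|00⟩ + |01⟩ − |10⟩ + |11⟩)`. -/
def psi1 : Fin 2 × Fin 2 → ℂ :=
  (1 / 2 : ℂ) • (e (0, 0) + e (0, 1) - e (1, 0) + e (1, 1))

/-- The nonce `|ψ₂⟩ = ½(|00⟩ − |01⟩ + |10⟩ + |11⟩)`. -/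
def psi2 : Fin 2 × Fin 2 → ℂ :=
  (1 / 2 : ℂ) • (e (0, 0) - e (0, 1) + e (1, 0) + e (1, 1))

/-- The nonce `|ψ₃⟩ = ½(|00⟩ + i|01⟩ − i|10⟩ − |11⟩)`. -/
def psi3 : Fin 2 × Fin 2 → ℂ :=
  (1 / 2 : ℂ) • (e (0, 0) + Complex.I • e (0, 1) - Complex.I • e (1, 0) - e (1, 1))

/-- The nonce `|ψ₄⟩ = ½(|00⟩ − i|01⟩ + i|10⟩ − |11⟩)`. -/
def psi4 : Fin 2 × Fin 2 → ℂ :=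
  (1 / 2 : ℂ) • (e (0, 0) - Complex.I • e (0, 1) + Complex.I • e (1, 0) - e (1, 1))

/-- The four nonces, indexed by `Fin 4`. -/
def nonce : Fin 4 → (Fin 2 × Fin 2 → ℂ) := ![psi1, psi2, psi3, psi4]

set_option maxHeartbeats 2000000 in
lemma groverE (s : Fin 2 × Fin 2) (v : Fin 2 × Fin 2 → ℂ) :
    grover (e s) v = fun p => if p = s then -(v s) else v p := by
  funext p
  simp only [grover, inner2, e, Pi.sub_apply, Pi.smul_apply, smul_eq_mul,
    apply_ite conj, map_one, map_zero, Finset.sum_ite_eq', Finset.mem_univ, if_true,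
    one_mul]
  split <;> simp_all <;> ring

set_option maxHeartbeats 2000000 in
lemma key (s : Fin 2 × Fin 2) (A : Matrix (Fin 2) (Fin 2) ℂ) :
    ∑ i : Fin 4, inner2 (grover (e s) (nonce i)) (applyIA A (grover (e s) (nonce i)))
      = 2 * A.trace := by
  simp only [groverE, inner2, applyIA, Fin.sum_univ_four, nonce, Matrix.cons_val_zero,
    Matrix.cons_val_one, Matrix.head_cons, Matrix.cons_val_two, Matrix.tail_cons,
    Matrix.cons_val_three]
  fin_cases s <;>
  · simp only [Fintype.sum_prod_type, Fin.sum_univ_two, Prod.mk.injEq,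
      psi1, psi2, psi3, psi4, e, Pi.sub_apply, Pi.add_apply, Pi.smul_apply,
      smul_eq_mul, Matrix.trace, Matrix.diag, Fin.isValue]
    norm_num [Complex.ext_iff, Prod.ext_iff]
    try ring_nf
    try simp [Complex.I_sq]
    try ring_nf

/-- For every secret `s`, the reduced states of the four shared states `U_{|s⟩}|ψ_i⟩` on
Bob's qubit sum to `2I` (`Σ_i ⟨U_s ψ_i|(I⊗A)|U_s ψ_i⟩ = 2 Tr A` for every `A`), so for
any single-qubit density matrix `ρ` the average fidelity of these four reduced states
with `ρ` is exactly `1/2`. -/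
theorem proposed_nonces_reduced_states_sum (s : Fin 2 × Fin 2) :
    (∀ A : Matrix (Fin 2) (Fin 2) ℂ,
      ∑ i : Fin 4, inner2 (grover (e s) (nonce i)) (applyIA A (grover (e s) (nonce i)))
        = 2 * A.trace) ∧
    (∀ ρ : Matrix (Fin 2) (Fin 2) ℂ, ρ.PosSemidef → ρ.trace = 1 →
      (1 / 4 : ℂ) * ∑ i : Fin 4,
          inner2 (grover (e s) (nonce i)) (applyIA ρ (grover (e s) (nonce i)))
        = 1 / 2) :=
  ⟨key s, fun ρ _ hρ => by rw [key s ρ, hρ]; norm_num⟩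

end
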